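/- Let η : ℤ² → A whose range is A (|A| ≥ 2), let S be an mlc η-generating set with conv(S) of positive area, and suppose ℓ and its reversal ℓ̄ are both one-sided nonexpansive directions on X_η. Then there exists an η-generating set T ⊆ S with diam_ℓ(T) ≤ ⌈(1/2) diam_ℓ(S)⌉, where diam_ℓ(T) is the number of distinct lines parallel to ℓ meeting T. -/

import Mathlib

/-- The number of distinct `S`-patterns of a configuration `η : ℤ² → A`. -/
noncomputable def patternCount {A : Type*} (η : ℤ × ℤ → A) (S : Finset (ℤ × ℤ)) : ℕ :=
  Set.ncard {w : (↥S) → A | ∃ u : ℤ × ℤ, ∀ s : ↥S, w s = η (u + (s : ℤ × ℤ))}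

/-- The canonical embedding of the lattice `ℤ²` into `ℝ²`. -/
def emb (g : ℤ × ℤ) : ℝ × ℝ := ((g.1 : ℝ), (g.2 : ℝ))

/-- A finite subset of `ℤ²` is (lattice) convex if it contains every lattice point of its
real convex hull. -/
def IsLatticeConvex (S : Finset (ℤ × ℤ)) : Prop :=
  ∀ g : ℤ × ℤ, emb g ∈ convexHull ℝ (emb '' (S : Set (ℤ × ℤ))) → g ∈ S

/-- Cross product of lattice vectors; lines parallel to the direction `v` are the level
sets of `cross v`, and the half plane of the oriented line through the origin with
direction `v` is `{g : 0 ≤ cross v g}`. -/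
def cross (v g : ℤ × ℤ) : ℤ := v.1 * g.2 - v.2 * g.1

/-!
Split the `n` lines of `S` parallel to `ℓ` into the top `⌈n/2⌉` and the rest, and keep the part
`H` with at least `|S|/2` points. Since `H` misses a line on one side, one-sided nonexpansiveness
of `ℓ` or `ℓ̄` forces `P_η(H) < P_η(S)`, and the mlc bound then leaves
`P_η(H) ≤ |H| + |A| - 2`. Deleting pattern-losing points keeps this bound, which a single point
violates, so the deletions stop at a generating subset of `H`.
-/

open Finset

lemma cross_add (v g h : ℤ × ℤ) : cross v (g + h) = cross v g + cross v h := by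
  simp only [cross, Prod.fst_add, Prod.snd_add]; ring

lemma cross_sub (v g h : ℤ × ℤ) : cross v (g - h) = cross v g - cross v h := by
  simp only [cross, Prod.fst_sub, Prod.snd_sub]; ring

lemma cross_neg_left (v g : ℤ × ℤ) : cross (-v) g = -cross v g := by
  simp only [cross, Prod.fst_neg, Prod.snd_neg]; ring

lemma emb_sub (g h : ℤ × ℤ) : emb (g - h) = emb g - emb h := by
  simp [emb]

def crossLinear (v : ℤ × ℤ) : ℝ × ℝ →ₗ[ℝ] ℝ :=
  (v.1 : ℝ) • LinearMap.snd ℝ ℝ ℝ - (v.2 : ℝ) • LinearMap.fst ℝ ℝ ℝ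

lemma crossLinear_emb (v g : ℤ × ℤ) : crossLinear v (emb g) = cross v g := by
  simp [crossLinear, emb, cross]

lemma IsLatticeConvex.filter_of_convex {S : Finset (ℤ × ℤ)} (hS : IsLatticeConvex S)
    {K : Set (ℝ × ℝ)} (hK : Convex ℝ K) (p : ℤ × ℤ → Prop) [DecidablePred p]
    (hp : ∀ g, p g ↔ emb g ∈ K) : IsLatticeConvex (S.filter p) := by
  intro g hg
  have hsub : (S.filter p : Set (ℤ × ℤ)) ⊆ S := filter_subset _ _
  have hK' : emb '' (S.filter p : Set (ℤ × ℤ)) ⊆ K := by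
    rintro _ ⟨s, hs, rfl⟩
    exact (hp s).mp (mem_filter.mp hs).2
  exact mem_filter.mpr
    ⟨hS g (convexHull_mono (Set.image_mono hsub) hg), (hp g).mpr (convexHull_min hK' hK hg)⟩

lemma IsLatticeConvex.filter_le_cross {S : Finset (ℤ × ℤ)} (hS : IsLatticeConvex S)
    (w : ℤ × ℤ) (c : ℤ) : IsLatticeConvex (S.filter (c ≤ cross w ·)) :=
  hS.filter_of_convex (convex_halfSpace_ge (crossLinear w).isLinear (c : ℝ)) _ fun g => by
    simp [crossLinear_emb]

lemma exists_smul_emb_eq_of_cross_eq_zero {v d : ℤ × ℤ} (hv : v ≠ 0) (h : cross v d = 0) :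
    ∃ r : ℝ, emb d = r • emb v := by
  have h' : (v.1 : ℝ) * d.2 = v.2 * d.1 := by
    have : ((cross v d : ℤ) : ℝ) = 0 := by exact_mod_cast h
    simp only [cross, Int.cast_sub, Int.cast_mul] at this
    linarith
  rcases ne_or_eq v.1 0 with h1 | h1
  · have h1' : (v.1 : ℝ) ≠ 0 := by exact_mod_cast h1
    refine ⟨d.1 / v.1, Prod.ext ?_ ?_⟩
    · simp only [emb, Prod.smul_mk, smul_eq_mul]
      field_simp
    · simp only [emb, Prod.smul_mk, smul_eq_mul]
      field_simp
      linarith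
  · have h2 : v.2 ≠ 0 := fun h2 => hv (Prod.ext h1 h2)
    have h2' : (v.2 : ℝ) ≠ 0 := by exact_mod_cast h2
    refine ⟨d.2 / v.2, Prod.ext ?_ ?_⟩
    · simp only [emb, Prod.smul_mk, smul_eq_mul]
      field_simp
      linarith
    · simp only [emb, Prod.smul_mk, smul_eq_mul]
      field_simp

lemma collinear_emb_of_cross_eq {S : Set (ℤ × ℤ)} {v : ℤ × ℤ} (hv : v ≠ 0) {c : ℤ}
    (hS : ∀ s ∈ S, cross v s = c) : Collinear ℝ (emb '' S) := by
  rcases S.eq_empty_or_nonempty with rfl | ⟨s₀, hs₀⟩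
  · simpa using collinear_empty ℝ (P := ℝ × ℝ)
  rw [collinear_iff_exists_forall_eq_smul_vadd]
  refine ⟨emb s₀, emb v, ?_⟩
  rintro _ ⟨s, hs, rfl⟩
  obtain ⟨r, hr⟩ := exists_smul_emb_eq_of_cross_eq_zero (d := s - s₀) hv
    (by rw [cross_sub, hS s hs, hS s₀ hs₀, sub_self])
  exact ⟨r, by rw [← hr, emb_sub, vadd_eq_add, sub_add_cancel]⟩

lemma one_lt_card_image_cross {S : Finset (ℤ × ℤ)}
    (harea : ¬ Collinear ℝ (emb '' (S : Set (ℤ × ℤ)))) {v : ℤ × ℤ} (hv : v ≠ 0) :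
    1 < (S.image (cross v)).card := by
  by_contra! h
  obtain ⟨c, hc⟩ : ∃ c, ∀ s ∈ S, cross v s = c := by
    rcases S.eq_empty_or_nonempty with rfl | ⟨s₀, hs₀⟩
    · exact ⟨0, by simp⟩
    exact ⟨cross v s₀, fun s hs =>
      card_le_one.mp h _ (mem_image_of_mem _ hs) _ (mem_image_of_mem _ hs₀)⟩
  exact harea (collinear_emb_of_cross_eq hv hc)

lemma Finset.exists_mem_card_filter_le_eq {α : Type*} [LinearOrder α] (C : Finset α) {k : ℕ}
    (hk : 0 < k) (hkC : k ≤ C.card) : ∃ c ∈ C, (C.filter (c ≤ ·)).card = k := by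
  induction k, hk using Nat.le_induction with
  | base =>
    have hC : C.Nonempty := card_pos.mp hkC
    refine ⟨C.max' hC, C.max'_mem hC, card_eq_one.mpr ⟨C.max' hC, ?_⟩⟩
    ext x
    simp only [mem_filter, mem_singleton]
    exact ⟨fun ⟨hx, hle⟩ => le_antisymm (C.le_max' x hx) hle,
      by rintro rfl; exact ⟨C.max'_mem hC, le_rfl⟩⟩
  | succ k hk ih =>
    obtain ⟨c, hcC, hc⟩ := ih (by omega)
    have hlow : (C.filter (· < c)).Nonempty := by
      rw [← card_pos]
      have := C.card_filter_add_card_filter_not (c ≤ ·)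
      simp only [not_le] at this
      omega
    set c' := (C.filter (· < c)).max' hlow
    have hc' : c' ∈ C ∧ c' < c := mem_filter.mp (max'_mem _ hlow)
    refine ⟨c', hc'.1, ?_⟩
    have : C.filter (c' ≤ ·) = insert c' (C.filter (c ≤ ·)) := by
      ext x
      simp only [mem_filter, mem_insert]
      constructor
      · rintro ⟨hx, hle⟩
        rcases lt_or_ge x c with hxc | hxc
        · exact Or.inl (le_antisymm (le_max' _ x (mem_filter.mpr ⟨hx, hxc⟩)) hle)
        · exact Or.inr ⟨hx, hxc⟩
      · rintro (rfl | ⟨hx, hle⟩)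
        · exact ⟨hc'.1, le_rfl⟩
        · exact ⟨hx, hc'.2.le.trans hle⟩
    rw [this, card_insert_of_notMem (by simp [hc'.2]), hc]

lemma Nat.ceil_natCast_div_two (n : ℕ) : ⌈(n : ℚ) / 2⌉₊ = (n + 1) / 2 := by
  rcases Nat.even_or_odd' n with ⟨m, rfl | rfl⟩
  · rw [show (2 * m + 1) / 2 = m by omega]
    push_cast
    rw [mul_div_cancel_left₀ _ two_ne_zero, Nat.ceil_natCast]
  · rw [show (2 * m + 1 + 1) / 2 = m + 1 by omega, Nat.ceil_eq_iff (by omega)]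
    push_cast
    constructor <;> linarith

section Patterns

variable {A : Type*} (η : ℤ × ℤ → A)

def patterns (S : Finset (ℤ × ℤ)) : Set (↥S → A) :=
  {w | ∃ u : ℤ × ℤ, ∀ s : ↥S, w s = η (u + (s : ℤ × ℤ))}

lemma patternCount_eq_ncard_patterns (S : Finset (ℤ × ℤ)) :
    patternCount η S = (patterns η S).ncard := rfl

lemma image_restrict₂_patterns {T S : Finset (ℤ × ℤ)} (hTS : T ⊆ S) :
    Finset.restrict₂ (π := fun _ => A) hTS '' patterns η S = patterns η T := by
  ext w
  constructor
  · rintro ⟨w', ⟨u, hu⟩, rfl⟩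
    exact ⟨u, fun t => hu ⟨t, hTS t.2⟩⟩
  · rintro ⟨u, hu⟩
    exact ⟨fun s => η (u + s), ⟨u, fun _ => rfl⟩, funext fun t => (hu t).symm⟩

variable [Finite A]

lemma patternCount_mono {T S : Finset (ℤ × ℤ)} (hTS : T ⊆ S) :
    patternCount η T ≤ patternCount η S := by
  rw [patternCount_eq_ncard_patterns, patternCount_eq_ncard_patterns,
    ← image_restrict₂_patterns η hTS]
  exact Set.ncard_image_le (Set.toFinite _)

/-- Restriction of patterns is onto, hence injective when the counts agree. -/
lemma eqOn_of_patternCount_eq {T S : Finset (ℤ × ℤ)} (hTS : T ⊆ S)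
    (hP : patternCount η T = patternCount η S) {u₁ u₂ : ℤ × ℤ}
    (hT : ∀ t ∈ T, η (u₁ + t) = η (u₂ + t)) : ∀ s ∈ S, η (u₁ + s) = η (u₂ + s) := by
  have hinj : Set.InjOn (Finset.restrict₂ (π := fun _ => A) hTS) (patterns η S) :=
    Set.injOn_of_ncard_image_eq (by rw [image_restrict₂_patterns]; exact hP)
  have := hinj ⟨u₁, fun _ => rfl⟩ ⟨u₂, fun _ => rfl⟩ (funext fun t => hT t t.2)
  exact fun s hs => congrFun this ⟨s, hs⟩

end Patterns

section Generating

variable {A : Type*} {η : ℤ × ℤ → A}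

lemma patterns_singleton (hη : Function.Surjective η) (g : ℤ × ℤ) :
    patterns η {g} = Set.univ := by
  refine Set.eq_univ_of_forall fun w => ?_
  obtain ⟨z, hz⟩ := hη (w ⟨g, mem_singleton_self g⟩)
  refine ⟨z - g, fun s => ?_⟩
  obtain ⟨s, hs⟩ := s
  obtain rfl := mem_singleton.mp hs
  rw [sub_add_cancel, hz]

variable [Fintype A]

lemma card_le_patternCount (hη : Function.Surjective η) {T : Finset (ℤ × ℤ)}
    (hT : T.Nonempty) : Fintype.card A ≤ patternCount η T := by
  obtain ⟨g, hg⟩ := hT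
  calc Fintype.card A = patternCount η {g} := by
        rw [patternCount_eq_ncard_patterns, patterns_singleton hη, Set.ncard_univ,
          Nat.card_eq_fintype_card, Fintype.card_fun, Fintype.card_coe, card_singleton,
          pow_one]
    _ ≤ patternCount η T := patternCount_mono η (singleton_subset_iff.mpr hg)

variable (η) in
def IsGenerating (T : Finset (ℤ × ℤ)) : Prop :=
  ∀ g ∈ T, IsLatticeConvex (T.erase g) → patternCount η T = patternCount η (T.erase g)

theorem exists_isGenerating_subset (hη : Function.Surjective η) {T : Finset (ℤ × ℤ)}
    (hT : T.Nonempty) (hconv : IsLatticeConvex T)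
    (hP : patternCount η T + 2 ≤ T.card + Fintype.card A) :
    ∃ T₀ ⊆ T, IsLatticeConvex T₀ ∧ T₀.Nonempty ∧ IsGenerating η T₀ := by
  by_cases hgen : IsGenerating η T
  · exact ⟨T, subset_rfl, hconv, hT, hgen⟩
  obtain ⟨g, hg, hconv', hlost⟩ : ∃ g ∈ T, IsLatticeConvex (T.erase g) ∧
      patternCount η (T.erase g) < patternCount η T := by
    simp only [IsGenerating, not_forall] at hgen
    obtain ⟨g, hg, hconv', hne⟩ := hgen
    exact ⟨g, hg, hconv', (patternCount_mono η (erase_subset g T)).lt_of_ne' hne⟩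
  have hcard := card_erase_of_mem hg
  have hA := card_le_patternCount hη hT
  have hne : (T.erase g).Nonempty := card_pos.mp (by omega)
  obtain ⟨T₀, hT₀, hT₀'⟩ := exists_isGenerating_subset hη hne hconv' (by omega)
  exact ⟨T₀, hT₀.trans (erase_subset g T), hT₀'⟩
termination_by T.card
decreasing_by exact card_erase_lt_of_mem hg

end Generating

section Orbit

variable {A : Type*} [TopologicalSpace A]

def orbitClosure {G : Type*} [Add G] (η : G → A) : Set (G → A) :=
  closure {y | ∃ u : G, y = fun g => η (g + u)}

lemma exists_eqOn_of_mem_orbitClosure [DiscreteTopology A] {G : Type*} [Add G] {η : G → A}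
    {x : G → A} (hx : x ∈ orbitClosure η) (F : Finset G) :
    ∃ u : G, ∀ f ∈ F, x f = η (f + u) := by
  have hU : Set.pi (F : Set G) (fun f => {x f}) ∈ nhds x :=
    set_pi_mem_nhds F.finite_toSet fun f _ => isOpen_discrete _ |>.mem_nhds rfl
  obtain ⟨_, hzU, u, rfl⟩ := mem_closure_iff_nhds.mp hx _ hU
  exact ⟨u, fun f hf => (hzU f hf).symm⟩

variable (η : ℤ × ℤ → A)

def IsOneSidedNonexpansive (w : ℤ × ℤ) : Prop :=
  ∃ x ∈ orbitClosure η, ∃ y ∈ orbitClosure η, x ≠ y ∧ ∀ g, 0 ≤ cross w g → x g = y g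

variable {η}

lemma IsOneSidedNonexpansive.exists_last_disagreement {w : ℤ × ℤ}
    (hw : IsOneSidedNonexpansive η w) :
    ∃ x ∈ orbitClosure η, ∃ y ∈ orbitClosure η, ∃ g₀, x g₀ ≠ y g₀ ∧
      ∀ g, cross w g₀ < cross w g → x g = y g := by
  obtain ⟨x, hx, y, hy, hxy, hagree⟩ := hw
  obtain ⟨_, ⟨g₀, hg₀, rfl⟩, hmax⟩ := Int.exists_greatest_of_bdd
    (P := fun z => ∃ g, x g ≠ y g ∧ cross w g = z)
    ⟨-1, by
      rintro _ ⟨g, hg, rfl⟩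
      by_contra! hlt
      exact hg (hagree g (by omega))⟩
    (by
      obtain ⟨g, hg⟩ := Function.ne_iff.mp hxy
      exact ⟨_, g, hg, rfl⟩)
  refine ⟨x, hx, y, hy, g₀, hg₀, fun g hg => ?_⟩
  by_contra hne
  exact (hmax _ ⟨g, hne, rfl⟩).not_gt hg

variable [DiscreteTopology A] [Finite A]

lemma eqOn_of_patternCount_eq_of_mem_orbitClosure {x y : ℤ × ℤ → A}
    (hx : x ∈ orbitClosure η) (hy : y ∈ orbitClosure η) {T S : Finset (ℤ × ℤ)} (hTS : T ⊆ S)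
    (hP : patternCount η T = patternCount η S) {u : ℤ × ℤ}
    (hT : ∀ t ∈ T, x (u + t) = y (u + t)) : ∀ s ∈ S, x (u + s) = y (u + s) := by
  obtain ⟨ux, hux⟩ := exists_eqOn_of_mem_orbitClosure hx (S.image (u + ·))
  obtain ⟨uy, huy⟩ := exists_eqOn_of_mem_orbitClosure hy (S.image (u + ·))
  have hxS : ∀ s ∈ S, x (u + s) = η ((u + ux) + s) := fun s hs => by
    rw [hux _ (mem_image_of_mem _ hs), add_right_comm]
  have hyS : ∀ s ∈ S, y (u + s) = η ((u + uy) + s) := fun s hs => by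
    rw [huy _ (mem_image_of_mem _ hs), add_right_comm]
  intro s hs
  rw [hxS s hs, hyS s hs]
  refine eqOn_of_patternCount_eq η hTS hP (fun t ht => ?_) s hs
  rw [← hxS t (hTS ht), ← hyS t (hTS ht), hT t ht]

/-- Translate the last disagreement of `x` and `y` to the lowest line of `S`: the part of
`S` on lines `≥ c` then lies where `x` and `y` agree, so if it had all the patterns of `S`,
they would agree everywhere on the translate of `S`. -/
lemma IsOneSidedNonexpansive.patternCount_filter_lt {w : ℤ × ℤ}
    (hw : IsOneSidedNonexpansive η w) {S : Finset (ℤ × ℤ)} {c : ℤ}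
    (hlow : ∃ s ∈ S, cross w s < c) :
    patternCount η (S.filter (c ≤ cross w ·)) < patternCount η S := by
  refine (patternCount_mono η (filter_subset _ S)).lt_of_ne fun hP => ?_
  obtain ⟨x, hx, y, hy, g₀, hg₀, hagree⟩ := hw.exists_last_disagreement
  obtain ⟨s₀, hs₀, hmin⟩ := S.exists_min_image (cross w) (hlow.imp fun s h => h.1)
  have hs₀c : cross w s₀ < c := let ⟨s, hs, hsc⟩ := hlow; (hmin s hs).trans_lt hsc
  refine hg₀ ?_
  have := eqOn_of_patternCount_eq_of_mem_orbitClosure hx hy (filter_subset _ S) hP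
    (u := g₀ - s₀) (fun t ht => hagree _ ?_) s₀ hs₀
  · rwa [sub_add_cancel] at this
  · rw [cross_add, cross_sub]
    linarith [(mem_filter.mp ht).2]

end Orbit

lemma exists_isGenerating_subset_filter_le_cross {A : Type*} [Fintype A] [TopologicalSpace A]
    [DiscreteTopology A] {η : ℤ × ℤ → A} (hη : Function.Surjective η) {S : Finset (ℤ × ℤ)}
    (hconv : IsLatticeConvex S)
    (hmlc : (patternCount η S : ℚ) ≤ (1 / 2) * S.card + Fintype.card A - 1)
    {w : ℤ × ℤ} (hw : IsOneSidedNonexpansive η w) {c : ℤ} (hlow : ∃ s ∈ S, cross w s < c)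
    (hhalf : S.card ≤ 2 * (S.filter (c ≤ cross w ·)).card) :
    ∃ T ⊆ S.filter (c ≤ cross w ·), IsLatticeConvex T ∧ T.Nonempty ∧ IsGenerating η T := by
  have hmlc' : 2 * patternCount η S + 2 ≤ S.card + 2 * Fintype.card A := by
    have : (2 * patternCount η S + 2 : ℚ) ≤ S.card + 2 * Fintype.card A := by linarith
    exact_mod_cast this
  have hlost := hw.patternCount_filter_lt hlow
  have hS : 0 < S.card := card_pos.mpr (hlow.imp fun _ h => h.1)
  exact exists_isGenerating_subset hη (card_pos.mp (by omega)) (hconv.filter_le_cross w c)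
    (by omega)

theorem exists_generating_subset_half_diameter_general
    {A : Type*} [Fintype A] [TopologicalSpace A] [DiscreteTopology A]
    (η : ℤ × ℤ → A) (hsurj : Function.Surjective η)
    (S : Finset (ℤ × ℤ)) (hSconv : IsLatticeConvex S)
    (hmlc1 : (patternCount η S : ℚ) ≤ (1 / 2) * S.card + Fintype.card A - 1)
    (harea : ¬ Collinear ℝ (emb '' (S : Set (ℤ × ℤ))))
    (v : ℤ × ℤ) (hv : v ≠ 0)
    (hnonexp : ∃ x ∈ closure {y : ℤ × ℤ → A | ∃ u : ℤ × ℤ, y = fun g => η (g + u)},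
      ∃ y ∈ closure {y : ℤ × ℤ → A | ∃ u : ℤ × ℤ, y = fun g => η (g + u)},
        x ≠ y ∧ ∀ g : ℤ × ℤ, 0 ≤ cross v g → x g = y g)
    (hnonexp' : ∃ x ∈ closure {y : ℤ × ℤ → A | ∃ u : ℤ × ℤ, y = fun g => η (g + u)},
      ∃ y ∈ closure {y : ℤ × ℤ → A | ∃ u : ℤ × ℤ, y = fun g => η (g + u)},
        x ≠ y ∧ ∀ g : ℤ × ℤ, 0 ≤ cross (-v) g → x g = y g) :
    ∃ T : Finset (ℤ × ℤ), T ⊆ S ∧ IsLatticeConvex T ∧ T.Nonempty ∧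
      (∀ g ∈ T, IsLatticeConvex (T.erase g) →
        patternCount η T = patternCount η (T.erase g)) ∧
      (T.image fun t => cross v t).card ≤ ⌈((S.image fun t => cross v t).card : ℚ) / 2⌉₊ := by
  set C := S.image (cross v)
  have hC : 1 < C.card := one_lt_card_image_cross harea hv
  obtain ⟨c, hcC, hupper⟩ := C.exists_mem_card_filter_le_eq (k := (C.card + 1) / 2)
    (by omega) (by omega)
  have hlower := C.card_filter_add_card_filter_not (c ≤ ·)
  have hsplit := S.card_filter_add_card_filter_not (c ≤ cross v ·)
  simp only [not_le] at hlower hsplit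
  rw [Nat.ceil_natCast_div_two]
  rcases le_total S.card (2 * (S.filter (c ≤ cross v ·)).card) with hhalf | hhalf
  · obtain ⟨x, hx⟩ := card_pos.mp (by omega : 0 < (C.filter (· < c)).card)
    obtain ⟨⟨s, hs, rfl⟩, hsc⟩ := mem_filter.mp hx |>.imp_left mem_image.mp
    obtain ⟨T, hT, hTconv, hTne, hTgen⟩ :=
      exists_isGenerating_subset_filter_le_cross hsurj hSconv hmlc1 hnonexp ⟨s, hs, hsc⟩ hhalf
    refine ⟨T, hT.trans (filter_subset _ S), hTconv, hTne, hTgen, ?_⟩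
    have hlines : T.image (cross v) ⊆ C.filter (c ≤ ·) :=
      (image_subset_image hT).trans filter_image.superset
    exact hupper ▸ card_le_card hlines
  · obtain ⟨s, hs, rfl⟩ := mem_image.mp hcC
    have hlowerS : S.filter (1 - cross v s ≤ cross (-v) ·) = S.filter (cross v · < cross v s) :=
      filter_congr fun g _ => by rw [cross_neg_left]; omega
    obtain ⟨T, hT, hTconv, hTne, hTgen⟩ :=
      exists_isGenerating_subset_filter_le_cross hsurj hSconv hmlc1 hnonexp' (c := 1 - cross v s)
        ⟨s, hs, by rw [cross_neg_left]; omega⟩ (by rw [hlowerS]; omega)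
    rw [hlowerS] at hT
    refine ⟨T, hT.trans (filter_subset _ S), hTconv, hTne, hTgen, ?_⟩
    have hlines : T.image (cross v) ⊆ C.filter (· < cross v s) :=
      (image_subset_image hT).trans (filter_image (p := (· < cross v s))).superset
    exact (card_le_card hlines).trans (by omega)

/-- If `ℓ` (direction `v`) and its reversal (direction `-v`) are both one-sided
nonexpansive on `X_η` and `S` is an mlc `η`-generating set of positive area, then there
is an `η`-generating set `T ⊆ S` with `diam_ℓ(T) ≤ ⌈diam_ℓ(S)/2⌉`, where `diam_ℓ`
counts the lines parallel to `ℓ` meeting the set. -/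
theorem exists_generating_subset_half_diameter
    {A : Type*} [Fintype A] [TopologicalSpace A] [DiscreteTopology A]
    (hA : 2 ≤ Fintype.card A)
    (η : ℤ × ℤ → A) (hsurj : Function.Surjective η)
    (S : Finset (ℤ × ℤ)) (hSne : S.Nonempty) (hSconv : IsLatticeConvex S)
    (hgen : ∀ g ∈ S, IsLatticeConvex (S.erase g) →
      patternCount η S = patternCount η (S.erase g))
    (hmlc1 : (patternCount η S : ℚ) ≤ (1 / 2) * S.card + Fintype.card A - 1)
    (hmlc2 : ∀ T : Finset (ℤ × ℤ), T ⊆ S → T ≠ S → T.Nonempty → IsLatticeConvex T →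
      ((1 : ℚ) / 2) * T.card + Fintype.card A - 1 < patternCount η T)
    (harea : ¬ Collinear ℝ (emb '' (S : Set (ℤ × ℤ))))
    (v : ℤ × ℤ) (hv : v ≠ 0)
    (hnonexp : ∃ x ∈ closure {y : ℤ × ℤ → A | ∃ u : ℤ × ℤ, y = fun g => η (g + u)},
      ∃ y ∈ closure {y : ℤ × ℤ → A | ∃ u : ℤ × ℤ, y = fun g => η (g + u)},
        x ≠ y ∧ ∀ g : ℤ × ℤ, 0 ≤ cross v g → x g = y g)
    (hnonexp' : ∃ x ∈ closure {y : ℤ × ℤ → A | ∃ u : ℤ × ℤ, y = fun g => η (g + u)},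
      ∃ y ∈ closure {y : ℤ × ℤ → A | ∃ u : ℤ × ℤ, y = fun g => η (g + u)},
        x ≠ y ∧ ∀ g : ℤ × ℤ, 0 ≤ cross (-v) g → x g = y g) :
    ∃ T : Finset (ℤ × ℤ), T ⊆ S ∧ IsLatticeConvex T ∧ T.Nonempty ∧
      (∀ g ∈ T, IsLatticeConvex (T.erase g) →
        patternCount η T = patternCount η (T.erase g)) ∧
      (T.image fun t => cross v t).card ≤ ⌈((S.image fun t => cross v t).card : ℚ) / 2⌉₊ :=
  exists_generating_subset_half_diameter_general η hsurj S hSconv hmlc1 harea v hv hnonexp hnonexp'
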